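/- A binary relation R ⊆ Σ* × Σ* is synchronous (recognized by a finite synchronous automaton, equivalently regular as a language over the paired alphabet) if and only if it is recognized by a finite synchronous algebra. -/

import Mathlib

/-- Letter-types: `l` for a pair of proper letters, `p` for (letter, padding),
`q` for (padding, letter). -/
inductive LTy | l | p | q
deriving DecidableEq

/-- The five types of (well-formed) synchronous words:
`ll`, `ll→lb` (= `lllb`), `lb`, `ll→bl` (= `llbl`), `bl`. -/
inductive STy | ll | lllb | lb | llbl | bl
deriving DecidableEq

namespace STy

/-- Letter-type of the first letter. -/
def src : STy → LTy
  | ll => .l | lllb => .l | lb => .p | llbl => .l | bl => .q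

/-- Letter-type of the last letter. -/
def tgt : STy → LTy
  | ll => .l | lllb => .p | lb => .p | llbl => .q | bl => .q

/-- `σ = α→β` is compatible with `τ = β'→γ` iff `β = β'` or `β = ll`. -/
def compat (σ τ : STy) : Prop := σ.tgt = τ.src ∨ σ.tgt = LTy.l

/-- Product of compatible types (junk on incompatible pairs). -/
def comp : STy → STy → STy
  | ll, ll => ll
  | ll, lllb => lllb
  | ll, lb => lllb
  | ll, llbl => llbl
  | ll, bl => llbl
  | lllb, _ => lllb
  | lb, _ => lb
  | llbl, _ => llbl
  | bl, _ => bl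

end STy

/-- A synchronous algebra: a `STy`-typed set with a dependency relation and a
partial associative product defined exactly on compatible pairs, monotone with
respect to dependency, with units.  The partial product is modelled as an
`Option`-valued total product. -/
structure SyncAlg where
  A : Type
  ty : A → STy
  dep : A → A → Prop
  mul : A → A → Option A
  dep_refl : ∀ x, dep x x
  dep_symm : ∀ {x y}, dep x y → dep y x
  dep_eq : ∀ {x y}, dep x y → ty x = ty y → x = y
  mul_defined : ∀ x y, (mul x y).isSome ↔ (ty x).compat (ty y)
  ty_mul : ∀ {x y z}, mul x y = some z → ty z = (ty x).comp (ty y)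
  mul_assoc : ∀ x y z,
    (mul x y).bind (fun a => mul a z) = (mul y z).bind (fun b => mul x b)
  dep_mul_left : ∀ {x x' y z z'}, dep x x' →
    mul x y = some z → mul x' y = some z' → dep z z'
  dep_mul_right : ∀ {x x' y z z'}, dep x x' →
    mul y x = some z → mul y x' = some z' → dep z z'
  unit : STy → A
  ty_unit : ∀ τ, ty (unit τ) = τ
  unit_mul : ∀ {τ x z}, mul (unit τ) x = some z → dep z x
  mul_unit : ∀ {τ x z}, mul x (unit τ) = some z → dep z x
  unit_lllb : mul (unit .ll) (unit .lb) = some (unit .lllb)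
  unit_llbl : mul (unit .ll) (unit .bl) = some (unit .llbl)

namespace SyncAlg

/-- A closed subset of a synchronous algebra: saturated under dependency. -/
def Closed (S : SyncAlg) (C : Set S.A) : Prop :=
  ∀ {x y : S.A}, S.dep x y → (x ∈ C ↔ y ∈ C)

/-- Two-sided partial product `x·a·y`. -/
def mul3 (S : SyncAlg) (x a y : S.A) : Option S.A :=
  (S.mul x a).bind fun u => S.mul u y

/-- The syntactic congruence of a subset `C` of a synchronous algebra. -/
def synCong (S : SyncAlg) (C : Set S.A) (a b : S.A) : Prop :=
  (∀ x y u v, S.mul3 x a y = some u → S.mul3 x b y = some v → (u ∈ C ↔ v ∈ C)) ∧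
  (∀ x u v, S.mul x a = some u → S.mul x b = some v → (u ∈ C ↔ v ∈ C)) ∧
  (∀ y u v, S.mul a y = some u → S.mul b y = some v → (u ∈ C ↔ v ∈ C))

/-- Left residual `x⁻¹C` of a closed subset `C` by an element `x`. -/
def lres (S : SyncAlg) (x : S.A) (C : Set S.A) : Set S.A :=
  { y | ∃ y' u, S.synCong C y' y ∧ S.mul x y' = some u ∧ u ∈ C }

/-- Right residual `C·x⁻¹` of a closed subset `C` by an element `x`. -/
def rres (S : SyncAlg) (x : S.A) (C : Set S.A) : Set S.A :=
  { y | ∃ y' u, S.synCong C y' y ∧ S.mul y' x = some u ∧ u ∈ C }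

end SyncAlg

/-- Morphisms of synchronous algebras: preserve types, units, product and
dependency. -/
structure SyncHom (S T : SyncAlg) where
  toFun : S.A → T.A
  map_ty : ∀ x, T.ty (toFun x) = S.ty x
  map_unit : ∀ τ, toFun (S.unit τ) = T.unit τ
  map_mul : ∀ {x y z}, S.mul x y = some z →
    T.mul (toFun x) (toFun y) = some (toFun z)
  map_dep : ∀ {x y}, S.dep x y → T.dep (toFun x) (toFun y)
/-- Synchronous words over an alphabet `α`, organized by their five types. -/
inductive SyncW (α : Type) : Type
  | wll : List (α × α) → SyncW α
  | wlllb : List (α × α) → List α → SyncW α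
  | wlb : List α → SyncW α
  | wllbl : List (α × α) → List α → SyncW α
  | wbl : List α → SyncW α

namespace SyncW

variable {α : Type}

/-- The type of a synchronous word. -/
def ty : SyncW α → STy
  | wll _ => .ll | wlllb _ _ => .lllb | wlb _ => .lb | wllbl _ _ => .llbl | wbl _ => .bl

/-- Base identifications of the dependency relation on synchronous words. -/
inductive dep0 : SyncW α → SyncW α → Prop
  | ll_lllb (w : List (α × α)) : dep0 (wll w) (wlllb w [])
  | ll_llbl (w : List (α × α)) : dep0 (wll w) (wllbl w [])
  | lb_lllb (s : List α) : dep0 (wlb s) (wlllb [] s)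
  | bl_llbl (s : List α) : dep0 (wbl s) (wllbl [] s)

/-- The dependency relation: reflexive-symmetric closure of `dep0`. -/
def dep (x y : SyncW α) : Prop := x = y ∨ dep0 x y ∨ dep0 y x

/-- Concatenation of synchronous words (partial). -/
def mul : SyncW α → SyncW α → Option (SyncW α)
  | wll w, wll w' => some (wll (w ++ w'))
  | wll w, wlllb w' s => some (wlllb (w ++ w') s)
  | wll w, wlb s => some (wlllb w s)
  | wll w, wllbl w' s => some (wllbl (w ++ w') s)
  | wll w, wbl s => some (wllbl w s)
  | wlllb w s, wlb s' => some (wlllb w (s ++ s'))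
  | wlb s, wlb s' => some (wlb (s ++ s'))
  | wllbl w s, wbl s' => some (wllbl w (s ++ s'))
  | wbl s, wbl s' => some (wbl (s ++ s'))
  | _, _ => none

/-- Decoding into the pair of words represented. -/
def decode : SyncW α → List α × List α
  | wll w => (w.map Prod.fst, w.map Prod.snd)
  | wlllb w s => (w.map Prod.fst ++ s, w.map Prod.snd)
  | wlb s => (s, [])
  | wllbl w s => (w.map Prod.fst, w.map Prod.snd ++ s)
  | wbl s => ([], s)

end SyncW

set_option maxHeartbeats 2000000 in
/-- The free synchronous algebra `Sync(α)` of synchronous words over `α`. -/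
def freeSync (α : Type) : SyncAlg where
  A := SyncW α
  ty := SyncW.ty
  dep := SyncW.dep
  mul := SyncW.mul
  dep_refl x := Or.inl rfl
  dep_symm h := by
    rcases h with rfl | h | h
    · exact Or.inl rfl
    · exact Or.inr (Or.inr h)
    · exact Or.inr (Or.inl h)
  dep_eq := by
    rintro x y (rfl | h | h) hty <;> first
      | rfl
      | (cases h <;> simp [SyncW.ty] at hty)
  mul_defined x y := by
    cases x <;> cases y <;>
      simp [SyncW.mul, SyncW.ty, STy.compat, STy.tgt, STy.src]
  ty_mul := by
    intro x y z h
    cases x <;> cases y <;>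
      simp [SyncW.mul] at h <;> subst h <;> rfl
  mul_assoc x y z := by
    cases x <;> cases y <;> cases z <;>
      simp [SyncW.mul, List.append_assoc]
  dep_mul_left := by
    intro x x' y z z' h h1 h2
    rcases h with rfl | h | h
    · rw [h1] at h2; injection h2 with h2; rw [h2]; exact Or.inl rfl
    · cases h <;> cases y <;>
        simp [SyncW.mul] at h1 h2 <;> subst h1 <;> subst h2 <;>
        first
          | exact Or.inl rfl
          | exact Or.inr (Or.inl (by constructor))
          | exact Or.inr (Or.inr (by constructor))
    · cases h <;> cases y <;>
        simp [SyncW.mul] at h1 h2 <;> subst h1 <;> subst h2 <;>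
        first
          | exact Or.inl rfl
          | exact Or.inr (Or.inl (by constructor))
          | exact Or.inr (Or.inr (by constructor))
  dep_mul_right := by
    intro x x' y z z' h h1 h2
    rcases h with rfl | h | h
    · rw [h1] at h2; injection h2 with h2; rw [h2]; exact Or.inl rfl
    · cases h <;> cases y <;>
        simp [SyncW.mul] at h1 h2 <;> subst h1 <;> subst h2 <;>
        first
          | exact Or.inl rfl
          | exact Or.inr (Or.inl (by constructor))
          | exact Or.inr (Or.inr (by constructor))
    · cases h <;> cases y <;>
        simp [SyncW.mul] at h1 h2 <;> subst h1 <;> subst h2 <;>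
        first
          | exact Or.inl rfl
          | exact Or.inr (Or.inl (by constructor))
          | exact Or.inr (Or.inr (by constructor))
  unit := fun τ => match τ with
    | .ll => .wll []
    | .lllb => .wlllb [] []
    | .lb => .wlb []
    | .llbl => .wllbl [] []
    | .bl => .wbl []
  ty_unit τ := by cases τ <;> rfl
  unit_mul := by
    intro τ x z h
    cases τ <;> cases x <;> simp [SyncW.mul] at h <;> subst h <;>
      first
        | exact Or.inl rfl
        | exact Or.inr (Or.inl (by constructor))
        | exact Or.inr (Or.inr (by constructor))
  mul_unit := by
    intro τ x z h
    cases τ <;> cases x <;> simp [SyncW.mul] at h <;> subst h <;>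
      first
        | exact Or.inl rfl
        | exact Or.inr (Or.inl (by constructor))
        | exact Or.inr (Or.inr (by constructor))
  unit_lllb := rfl
  unit_llbl := rfl

/-- The closed subset of `Sync(α)` induced by a relation `R ⊆ α* × α*`. -/
def projS {α : Type} (R : Set (List α × List α)) : Set (SyncW α) :=
  { x | x.decode ∈ R }

/-- `⟨φ, B, Acc⟩` recognizes the relation `R` when `Acc` is closed and
`proj R = φ⁻¹[Acc]`. -/
def RecognizesRel {α : Type} (B : SyncAlg) (φ : SyncHom (freeSync α) B)
    (Acc : Set B.A) (R : Set (List α × List α)) : Prop :=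
  B.Closed Acc ∧ projS R = φ.toFun ⁻¹' Acc

/-- The paired alphabet `Σ₂⊥ = (Σ×Σ) ⊕ (Σ×{⊥}) ⊕ ({⊥}×Σ)`. -/
def PL (α : Type) : Type := (α × α) ⊕ α ⊕ α

/-- A word over `Σ₂⊥` is well-formed when padding symbols are placed
consistently: a block of letter-pairs followed by a block of padded letters on
a single side. -/
def WF {α : Type} (l : List (PL α)) : Prop :=
  ∃ (w : List (α × α)) (s : List α),
    l = w.map Sum.inl ++ s.map (fun a => Sum.inr (Sum.inl a)) ∨
    l = w.map Sum.inl ++ s.map (fun a => Sum.inr (Sum.inr a))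

/-- Decode a word over `Σ₂⊥` into the pair of words it represents
(stripping padding symbols). -/
def decodeW {α : Type} (l : List (PL α)) : List α × List α :=
  (l.filterMap (fun x => match x with
      | Sum.inl p => some p.1
      | Sum.inr (Sum.inl a) => some a
      | Sum.inr (Sum.inr _) => none),
   l.filterMap (fun x => match x with
      | Sum.inl p => some p.2
      | Sum.inr (Sum.inl _) => none
      | Sum.inr (Sum.inr a) => some a))

/-- The language over `Σ₂⊥` corresponding to a relation `R ⊆ α* × α*`:
well-formed words whose decoded pair lies in `R`. -/
def langOf {α : Type} (R : Set (List α × List α)) : Language (PL α) :=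
  { l | WF l ∧ decodeW l ∈ R }

/-!
A DFA over `Σ₂⊥` yields its (finite) transition monoid `M`, and the algebra `STy × M`, in which
elements of equal monoid component depend on each other, receives the morphism sending a
synchronous word to its type and the transition of its encoding.

Conversely, a morphism `φ` into a finite algebra `B` is simulated by the DFA on `Option B.A` that
starts at the unit of type `ll` and multiplies by `φ` of each letter, `none` recording an undefined
product. Run on the free algebra, this DFA turns exactly the well-formed words into a synchronous
word encoding them; starting from `ll` is harmless because e.g. `wll [] · wlb s = wlllb [] s`
decodes like `wlb s`.
-/

attribute [reducible] PL

namespace STy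

instance : Fintype STy where
  elems := {ll, lllb, lb, llbl, bl}
  complete x := by cases x <;> decide

instance (σ τ : STy) : Decidable (σ.compat τ) :=
  inferInstanceAs (Decidable (_ ∨ _))

theorem comp_assoc (σ τ ρ : STy) : (σ.comp τ).comp ρ = σ.comp (τ.comp ρ) := by
  revert σ τ ρ
  decide

theorem compat_comp_left_iff {σ τ : STy} (h : σ.compat τ) (ρ : STy) :
    (σ.comp τ).compat ρ ↔ τ.compat ρ := by
  revert σ τ ρ
  decide

theorem compat_comp_right_iff {τ ρ : STy} (h : τ.compat ρ) (σ : STy) :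
    σ.compat (τ.comp ρ) ↔ σ.compat τ := by
  revert σ τ ρ
  decide

end STy

namespace SyncW

variable {α : Type}

def encode : SyncW α → List (PL α)
  | wll w => w.map Sum.inl
  | wlllb w s => w.map Sum.inl ++ s.map (fun a => Sum.inr (Sum.inl a))
  | wlb s => s.map (fun a => Sum.inr (Sum.inl a))
  | wllbl w s => w.map Sum.inl ++ s.map (fun a => Sum.inr (Sum.inr a))
  | wbl s => s.map (fun a => Sum.inr (Sum.inr a))

def atom : PL α → SyncW α
  | Sum.inl p => wll [p]
  | Sum.inr (Sum.inl a) => wlb [a]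
  | Sum.inr (Sum.inr a) => wbl [a]

theorem encode_atom (c : PL α) : (atom c).encode = [c] := by
  rcases c with p | a | a <;> rfl

theorem wf_encode (x : SyncW α) : WF x.encode := by
  cases x with
  | wll w => exact ⟨w, [], Or.inl (by simp [encode])⟩
  | wlllb w s => exact ⟨w, s, Or.inl rfl⟩
  | wlb s => exact ⟨[], s, Or.inl (by simp [encode])⟩
  | wllbl w s => exact ⟨w, s, Or.inr rfl⟩
  | wbl s => exact ⟨[], s, Or.inr (by simp [encode])⟩

theorem decodeW_encode (x : SyncW α) : decodeW x.encode = x.decode := by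
  cases x <;> simp [decodeW, encode, decode, List.filterMap_append, List.filterMap_map]

theorem mem_langOf_encode (R : Set (List α × List α)) (x : SyncW α) :
    x.encode ∈ langOf R ↔ x.decode ∈ R :=
  ⟨fun h => decodeW_encode x ▸ h.2, fun h => ⟨wf_encode x, (decodeW_encode x).symm ▸ h⟩⟩

theorem encode_eq_of_mul_eq_some {x y z : SyncW α} (h : mul x y = some z) :
    z.encode = x.encode ++ y.encode := by
  cases x <;> cases y <;> cases h <;> simp [encode]

theorem encode_eq_of_dep {x y : SyncW α} (h : dep x y) : x.encode = y.encode := by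
  rcases h with rfl | h | h <;> [rfl; cases h; cases h] <;> simp [encode]

end SyncW

def SyncAlg.toDFA {β : Type*} (B : SyncAlg) (letter : β → B.A) (Acc : Set B.A) :
    DFA β (Option B.A) where
  step o c := o.bind fun b => B.mul b (letter c)
  start := some (B.unit .ll)
  accept := some '' Acc

namespace SyncHom

variable {S T : SyncAlg} (φ : SyncHom S T)

theorem mul_map (x y : S.A) : T.mul (φ.toFun x) (φ.toFun y) = (S.mul x y).map φ.toFun := by
  cases hxy : S.mul x y with
  | some z => exact φ.map_mul hxy
  | none =>
    rw [Option.map_none, ← Option.not_isSome_iff_eq_none, T.mul_defined, φ.map_ty, φ.map_ty,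
      ← S.mul_defined, hxy]
    exact Bool.false_ne_true

theorem evalFrom_toDFA {β : Type*} (letter : β → S.A) (Acc : Set T.A) (o : Option S.A)
    (l : List β) :
    (T.toDFA (φ.toFun ∘ letter) Acc).evalFrom (o.map φ.toFun) l =
      ((S.toDFA letter (φ.toFun ⁻¹' Acc)).evalFrom o l).map φ.toFun := by
  induction l generalizing o with
  | nil => rfl
  | cons c l ih =>
    rw [DFA.evalFrom_cons, DFA.evalFrom_cons, ← ih]
    congr 1
    cases o <;> simp [SyncAlg.toDFA, mul_map]

theorem accepts_toDFA {β : Type*} (letter : β → S.A) (Acc : Set T.A) :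
    (T.toDFA (φ.toFun ∘ letter) Acc).accepts = (S.toDFA letter (φ.toFun ⁻¹' Acc)).accepts := by
  ext l
  have hstart : (T.toDFA (φ.toFun ∘ letter) Acc).start =
      (S.toDFA letter (φ.toFun ⁻¹' Acc)).start.map φ.toFun :=
    congrArg some (φ.map_unit .ll).symm
  rw [DFA.mem_accepts, DFA.mem_accepts, DFA.eval, hstart, evalFrom_toDFA, ← DFA.eval]
  cases (S.toDFA letter (φ.toFun ⁻¹' Acc)).eval l <;> simp [SyncAlg.toDFA]

end SyncHom

namespace SyncW

variable {α : Type} (A : Set (SyncW α))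

def parseDFA : DFA (PL α) (Option (SyncW α)) := (freeSync α).toDFA atom A

theorem parseDFA_start : (parseDFA A).start = some (wll []) :=
  rfl

theorem parseDFA_step_some (x : SyncW α) (c : PL α) :
    (parseDFA A).step (some x) c = mul x (atom c) :=
  rfl

theorem evalFrom_parseDFA_map {β : Type} (e : β → PL α) (F : List β → SyncW α)
    (hF : ∀ t b, mul (F t) (atom (e b)) = some (F (t ++ [b]))) (t l : List β) :
    (parseDFA A).evalFrom (some (F t)) (l.map e) = some (F (t ++ l)) := by
  induction l generalizing t with
  | nil => simp
  | cons b l ih => simp [DFA.evalFrom_cons, parseDFA_step_some, hF, ih]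

theorem isSome_eval_parseDFA_of_wf {l : List (PL α)} (hl : WF l) :
    ((parseDFA A).eval l).isSome := by
  obtain ⟨w, s, rfl | rfl⟩ := hl
  all_goals
    rw [DFA.eval, DFA.evalFrom_of_append, parseDFA_start,
      evalFrom_parseDFA_map A Sum.inl wll (fun _ _ => rfl) [] w, List.nil_append]
    rcases s with _ | ⟨a, s⟩
    · rfl
    rw [List.map_cons, DFA.evalFrom_cons, parseDFA_step_some]
  · rw [show mul (wll w) (atom _) = some (wlllb w [a]) from rfl,
      evalFrom_parseDFA_map A _ (wlllb w) (fun _ _ => rfl) [a] s]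
    rfl
  · rw [show mul (wll w) (atom _) = some (wllbl w [a]) from rfl,
      evalFrom_parseDFA_map A _ (wllbl w) (fun _ _ => rfl) [a] s]
    rfl

theorem encode_eq_of_evalFrom_parseDFA {o : Option (SyncW α)} {l : List (PL α)}
    {y : SyncW α} (h : (parseDFA A).evalFrom o l = some y) :
    ∃ x, o = some x ∧ y.encode = x.encode ++ l := by
  induction l generalizing o with
  | nil => exact ⟨y, h, by simp⟩
  | cons c l ih =>
    obtain ⟨x', hx', hy⟩ := ih h
    obtain ⟨x, rfl, hxc⟩ := Option.bind_eq_some_iff.mp hx'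
    refine ⟨x, rfl, ?_⟩
    rw [hy, encode_eq_of_mul_eq_some hxc, encode_atom, List.append_assoc, List.singleton_append]

theorem eq_encode_of_eval_parseDFA {l : List (PL α)} {y : SyncW α}
    (h : (parseDFA A).eval l = some y) : l = y.encode := by
  obtain ⟨x, hx, hy⟩ := encode_eq_of_evalFrom_parseDFA A h
  obtain rfl : wll [] = x := Option.some_inj.mp hx
  simpa [encode] using hy.symm

theorem accepts_parseDFA (R : Set (List α × List α)) :
    (parseDFA (projS R)).accepts = langOf R := by
  ext l
  rw [DFA.mem_accepts]
  constructor
  · rintro ⟨y, hyR, hy⟩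
    rw [eq_encode_of_eval_parseDFA _ hy.symm]
    exact (mem_langOf_encode R y).mpr hyR
  · intro hl
    obtain ⟨y, hy⟩ := Option.isSome_iff_exists.mp (isSome_eval_parseDFA_of_wf (projS R) hl.1)
    obtain rfl := eq_encode_of_eval_parseDFA _ hy
    exact ⟨y, (mem_langOf_encode R y).mp hl, hy.symm⟩

end SyncW

section Induced

variable (N : Type) [Monoid N]

def inducedMul (x y : STy × N) : Option (STy × N) :=
  if x.1.compat y.1 then some (x.1.comp y.1, x.2 * y.2) else none

variable {N}

theorem inducedMul_eq_some {x y z : STy × N} :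
    inducedMul N x y = some z ↔ x.1.compat y.1 ∧ z = (x.1.comp y.1, x.2 * y.2) := by
  unfold inducedMul
  split_ifs with h <;> simp [h, eq_comm]

theorem inducedMul_assoc (x y z : STy × N) :
    (inducedMul N x y).bind (inducedMul N · z) = (inducedMul N y z).bind (inducedMul N x ·) := by
  unfold inducedMul
  by_cases hxy : x.1.compat y.1 <;> by_cases hyz : y.1.compat z.1 <;>
    simp only [hxy, hyz, if_true, if_false, Option.bind_none, Option.bind_some]
  · rw [if_pos ((STy.compat_comp_left_iff hxy _).mpr hyz),
      if_pos ((STy.compat_comp_right_iff hyz _).mpr hxy), STy.comp_assoc, mul_assoc]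
  · rw [if_neg (mt (STy.compat_comp_left_iff hxy _).mp hyz)]
  · rw [if_neg (mt (STy.compat_comp_right_iff hyz _).mp hxy)]

variable (N)

def inducedAlg : SyncAlg where
  A := STy × N
  ty := Prod.fst
  dep x y := x.2 = y.2
  mul := inducedMul N
  dep_refl _ := rfl
  dep_symm h := h.symm
  dep_eq h h' := Prod.ext h' h
  mul_defined x y := by
    rw [Option.isSome_iff_exists]
    simp only [inducedMul_eq_some, exists_and_left, exists_eq, and_true]
  ty_mul h := by rw [(inducedMul_eq_some.mp h).2]
  mul_assoc := inducedMul_assoc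
  dep_mul_left {_ _ y _ _} h h₁ h₂ := by
    rw [(inducedMul_eq_some.mp h₁).2, (inducedMul_eq_some.mp h₂).2]
    exact congrArg (· * y.2) h
  dep_mul_right {_ _ y _ _} h h₁ h₂ := by
    rw [(inducedMul_eq_some.mp h₁).2, (inducedMul_eq_some.mp h₂).2]
    exact congrArg (y.2 * ·) h
  unit τ := (τ, 1)
  ty_unit _ := rfl
  unit_mul h := by rw [(inducedMul_eq_some.mp h).2]; exact one_mul _
  mul_unit h := by rw [(inducedMul_eq_some.mp h).2]; exact mul_one _
  unit_lllb := inducedMul_eq_some.mpr ⟨show STy.compat .ll .lb by decide, by rw [mul_one]; rfl⟩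
  unit_llbl := inducedMul_eq_some.mpr ⟨show STy.compat .ll .bl by decide, by rw [mul_one]; rfl⟩

instance [Finite N] : Finite (inducedAlg N).A :=
  inferInstanceAs (Finite (STy × N))

variable {N} {α : Type}

def inducedHom (h : FreeMonoid (PL α) →* N) : SyncHom (freeSync α) (inducedAlg N) where
  toFun x := (SyncW.ty x, h (FreeMonoid.ofList x.encode))
  map_ty _ := rfl
  map_unit τ := by cases τ <;> exact congrArg (Prod.mk _) h.map_one
  map_mul {x y z} hxy := by
    refine inducedMul_eq_some.mpr ⟨((freeSync α).mul_defined x y).mp (by rw [hxy]; rfl), ?_⟩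
    rw [← map_mul, ← FreeMonoid.ofList_append, ← SyncW.encode_eq_of_mul_eq_some hxy]
    exact Prod.ext ((freeSync α).ty_mul hxy) rfl
  map_dep hxy := congrArg (fun l => h (FreeMonoid.ofList l)) (SyncW.encode_eq_of_dep hxy)

theorem recognizesRel_inducedHom (R : Set (List α × List α)) (h : FreeMonoid (PL α) →* N)
    (S : Set N) (hS : ∀ l, l ∈ langOf R ↔ h (FreeMonoid.ofList l) ∈ S) :
    RecognizesRel (inducedAlg N) (inducedHom h) (Prod.snd ⁻¹' S) R :=
  ⟨fun hxy => iff_of_eq (congrArg (· ∈ S) hxy),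
    Set.ext fun x => (SyncW.mem_langOf_encode R x).symm.trans (hS x.encode)⟩

end Induced

namespace DFA

variable {β σ : Type*} (M : DFA β σ)

def transitionHom : FreeMonoid β →* (Function.End σ)ᵐᵒᵖ :=
  FreeMonoid.lift fun c => MulOpposite.op (show Function.End σ from fun s => M.step s c)

theorem unop_transitionHom_ofList (l : List β) (s : σ) :
    (M.transitionHom (FreeMonoid.ofList l)).unop s = M.evalFrom s l := by
  induction l generalizing s with
  | nil => rfl
  | cons c l ih =>
    rw [FreeMonoid.ofList_cons, map_mul, MulOpposite.unop_mul]
    exact ih (M.step s c)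

end DFA

theorem synchronous_iff_finite_algebra_general (α : Type)
    (R : Set (List α × List α)) :
    (langOf R).IsRegular ↔
      ∃ (B : SyncAlg) (_ : Finite B.A) (φ : SyncHom (freeSync α) B)
        (Acc : Set B.A), RecognizesRel B φ Acc R := by
  constructor
  · rintro ⟨σ, _, M, hM⟩
    have : Finite (Function.End σ)ᵐᵒᵖ := Finite.of_equiv (σ → σ) MulOpposite.opEquiv
    refine ⟨inducedAlg (Function.End σ)ᵐᵒᵖ, inferInstance, inducedHom M.transitionHom, _,
      recognizesRel_inducedHom R M.transitionHom {f | f.unop M.start ∈ M.accept} fun l => ?_⟩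
    rw [← hM, DFA.mem_accepts]
    exact iff_of_eq (congrArg (· ∈ M.accept) (M.unop_transitionHom_ofList l M.start).symm)
  · rintro ⟨B, _, φ, Acc, -, hproj⟩
    have : Fintype B.A := Fintype.ofFinite _
    refine ⟨Option B.A, inferInstance, _, (φ.accepts_toDFA SyncW.atom Acc).trans ?_⟩
    rw [← hproj]
    exact SyncW.accepts_parseDFA R

/-- A relation `R ⊆ α* × α*` is synchronous (regular as a
language over the paired alphabet `Σ₂⊥`) if and only if it is recognized by a
finite synchronous algebra. -/
theorem synchronous_iff_finite_algebra (α : Type) [Finite α]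
    (R : Set (List α × List α)) :
    (langOf R).IsRegular ↔
      ∃ (B : SyncAlg) (_ : Finite B.A) (φ : SyncHom (freeSync α) B)
        (Acc : Set B.A), RecognizesRel B φ Acc R :=
  synchronous_iff_finite_algebra_general α R
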